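/- arXiv:1306.5996 — 4 statements merged into one kernel-verified Lean document; each statement's English description precedes it below -/
import Mathlib

section
/- Under these assumptions, E[e^{h·X}] < 1 and E[X]·h < 0; in particular E[X] ≠ 0. -/
open MeasureTheory ProbabilityTheory Filter Topology

noncomputable section

/-- The dot product `h · x` on `ℝ^d`. -/
def dotR {d : ℕ} (h x : EuclideanSpace ℝ (Fin d)) : ℝ := ∑ i, h i * x i

open RealInnerProductSpace in
lemma dotR_eq_inner {d : ℕ} (h x : EuclideanSpace ℝ (Fin d)) : dotR h x = ⟪h, x⟫ := by
  simp [dotR, PiLp.inner_apply]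
  exact Finset.sum_congr rfl fun _ _ => mul_comm _ _

lemma exp_lt_aux {y : ℝ} (hy : y ≠ 0) : Real.exp y < 1 + y * Real.exp y := by
  rcases lt_or_ge y 1 with hy1 | hy1
  · have h1 : -y + 1 < Real.exp (-y) := Real.add_one_lt_exp (neg_ne_zero.2 hy)
    have h2 : Real.exp (-y) * Real.exp y = 1 := by
      rw [← Real.exp_add]; simp
    nlinarith [Real.exp_pos y]
  · nlinarith [Real.exp_pos y]

lemma exp_le_aux (y : ℝ) : Real.exp y ≤ 1 + y * Real.exp y := by
  rcases eq_or_ne y 0 with rfl | hy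
  · simp
  · exact (exp_lt_aux hy).le

/-- under the stated assumptions, `E[e^{h·X}] < 1` and `E[X]·h < 0`;
in particular `E[X] ≠ 0`. -/
theorem stmt1 {d : ℕ} (hd : 1 ≤ d) {Ω : Type*} [MeasurableSpace Ω]
    (P : Measure Ω) [IsProbabilityMeasure P]
    (X : Ω → EuclideanSpace ℝ (Fin d)) (hXmeas : Measurable X)
    (hXint : Integrable X P)
    (h : EuclideanSpace ℝ (Fin d)) (hh : h ≠ 0) (ε : ℝ) (hε : 0 < ε)
    (hexpint : ∀ t ∈ Set.Ioo (-ε) (1 + ε),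
      Integrable (fun ω => Real.exp (t * dotR h (X ω))) P)
    (hnondeg : P {ω | dotR h (X ω) = 0} < 1)
    (hXexpint : Integrable (fun ω => ‖X ω‖ * Real.exp (dotR h (X ω))) P)
    (hcramer : (∫ ω, Real.exp (dotR h (X ω)) • X ω ∂P) = 0) :
    (∫ ω, Real.exp (dotR h (X ω)) ∂P) < 1 ∧
      dotR h (∫ ω, X ω ∂P) < 0 ∧ (∫ ω, X ω ∂P) ≠ 0 := by
  set Y : Ω → ℝ := fun ω => dotR h (X ω) with hYdef
  have hYfun : ∀ ω, Y ω = inner ℝ h (X ω) := fun ω => dotR_eq_inner h (X ω)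
  have hYmeas : Measurable Y := by
    have : Measurable fun ω => (inner ℝ h (X ω) : ℝ) :=
      ((continuous_const.inner continuous_id).measurable).comp hXmeas
    simpa only [← hYfun] using this
  -- integrability facts
  have intE : Integrable (fun ω => Real.exp (Y ω)) P := by
    have := hexpint 1 ⟨by linarith, by linarith⟩
    simpa using this
  have hYbound : ∀ ω, |Y ω| ≤ ‖h‖ * ‖X ω‖ := fun ω => by
    rw [hYfun ω]; exact abs_real_inner_le_norm h (X ω)
  have intYE : Integrable (fun ω => Y ω * Real.exp (Y ω)) P := by
    apply Integrable.mono (hXexpint.const_mul ‖h‖)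
    · exact (hYmeas.mul (Real.measurable_exp.comp hYmeas)).aestronglyMeasurable
    · filter_upwards with ω
      have h2 : (0:ℝ) < Real.exp (Y ω) := Real.exp_pos _
      rw [Real.norm_eq_abs, Real.norm_eq_abs, abs_mul, abs_of_pos h2,
        abs_of_nonneg (by positivity : (0:ℝ) ≤ ‖h‖ * (‖X ω‖ * Real.exp (Y ω)))]
      have := hYbound ω
      nlinarith [abs_nonneg (Y ω), norm_nonneg (X ω)]
  have intY : Integrable Y P := by
    apply Integrable.mono (hXint.norm.const_mul ‖h‖)
    · exact hYmeas.aestronglyMeasurable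
    · filter_upwards with ω
      rw [Real.norm_eq_abs, Real.norm_eq_abs,
        abs_of_nonneg (by positivity : (0:ℝ) ≤ ‖h‖ * ‖X ω‖)]
      exact hYbound ω
  have intXE : Integrable (fun ω => Real.exp (Y ω) • X ω) P := by
    apply Integrable.mono' hXexpint
    · exact ((Real.measurable_exp.comp hYmeas).aestronglyMeasurable.smul
        hXmeas.aestronglyMeasurable)
    · filter_upwards with ω
      rw [norm_smul, Real.norm_eq_abs, abs_of_pos (Real.exp_pos _)]
      exact le_of_eq (mul_comm _ _)
  -- E[Y e^Y] = 0
  have hYE0 : ∫ ω, Y ω * Real.exp (Y ω) ∂P = 0 := by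
    have hi := integral_inner (𝕜 := ℝ) intXE h
    rw [hcramer] at hi
    simp only [inner_zero_right] at hi
    rw [← hi]
    congr 1; funext ω
    rw [real_inner_smul_right, ← hYfun ω]; ring
  -- positivity of ∫ (1 + Y e^Y - e^Y)
  have hfnn : ∀ ω, (0:ℝ) ≤ 1 + Y ω * Real.exp (Y ω) - Real.exp (Y ω) := fun ω => by
    have := exp_le_aux (Y ω); linarith
  have intf : Integrable (fun ω => 1 + Y ω * Real.exp (Y ω) - Real.exp (Y ω)) P :=
    ((integrable_const 1).add intYE).sub intE
  have hfne : ∫ ω, (1 + Y ω * Real.exp (Y ω) - Real.exp (Y ω)) ∂P ≠ 0 := by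
    intro h0
    rw [integral_eq_zero_iff_of_nonneg hfnn intf] at h0
    have hae : ∀ᵐ ω ∂P, Y ω = 0 := by
      filter_upwards [h0] with ω hω
      by_contra hne
      have := exp_lt_aux hne
      simp only [Pi.zero_apply] at hω
      linarith
    have hm : MeasurableSet {ω | Y ω = 0} := hYmeas (measurableSet_singleton 0)
    have : P {ω | Y ω = 0} = 1 := by
      rw [← prob_compl_eq_zero_iff hm]
      exact hae
    have h1 : P {ω | dotR h (X ω) = 0} = 1 := this
    rw [h1] at hnondeg
    exact lt_irrefl _ hnondeg
  have hfpos : 0 < ∫ ω, (1 + Y ω * Real.exp (Y ω) - Real.exp (Y ω)) ∂P :=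
    lt_of_le_of_ne (integral_nonneg hfnn) (Ne.symm hfne)
  have hintf : ∫ ω, (1 + Y ω * Real.exp (Y ω) - Real.exp (Y ω)) ∂P
      = 1 - ∫ ω, Real.exp (Y ω) ∂P := by
    calc ∫ ω, (1 + Y ω * Real.exp (Y ω) - Real.exp (Y ω)) ∂P
        = (∫ ω, (1 + Y ω * Real.exp (Y ω)) ∂P) - ∫ ω, Real.exp (Y ω) ∂P :=
          integral_sub ((integrable_const 1).add intYE) intE
      _ = ((∫ _ω, (1:ℝ) ∂P) + ∫ ω, Y ω * Real.exp (Y ω) ∂P) - ∫ ω, Real.exp (Y ω) ∂P := by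
          rw [integral_add (integrable_const 1) intYE]
      _ = 1 - ∫ ω, Real.exp (Y ω) ∂P := by rw [hYE0, integral_const]; simp
  have hI : (∫ ω, Real.exp (Y ω) ∂P) < 1 := by
    rw [hintf] at hfpos; linarith
  -- second conjunct
  have hswap : dotR h (∫ ω, X ω ∂P) = ∫ ω, Y ω ∂P := by
    rw [dotR_eq_inner, ← integral_inner hXint h]
    congr 1
    funext ω; exact (hYfun ω).symm
  have hEY : (∫ ω, Y ω ∂P) < 0 := by
    have hmono : (∫ ω, Y ω ∂P) ≤ ∫ ω, (Real.exp (Y ω) - 1) ∂P := by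
      apply integral_mono intY (intE.sub (integrable_const 1))
      intro ω
      have := Real.add_one_le_exp (Y ω)
      simp only [Pi.sub_apply]
      linarith
    rw [integral_sub intE (integrable_const 1), integral_const] at hmono
    simp at hmono
    linarith
  refine ⟨hI, by rw [hswap]; exact hEY, ?_⟩
  intro h0
  rw [h0] at hswap
  have : dotR h (0 : EuclideanSpace ℝ (Fin d)) = 0 := by simp [dotR]
  rw [this] at hswap
  linarith [hswap ▸ hEY]
end
end

section
/- For all x, y ∈ K∩ℤ^d, ℙ(τ_x = n)/ℙ(τ_y = n) → U(x)/U(y) as n → ∞ (in particular ℙ(τ_y = n) > 0 for all sufficiently large n). -/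
open MeasureTheory ProbabilityTheory Filter Topology

noncomputable section

/-- The embedding of the lattice `ℤ^d` into `ℝ^d`. -/
def embZ (d : ℕ) (z : Fin d → ℤ) : EuclideanSpace ℝ (Fin d) := WithLp.toLp 2 (fun i => (z i : ℝ))

/-- The random walk `S(n) = X(1) + ⋯ + X(n)` (indexed from 0). -/
def walk {Ω : Type*} {d : ℕ} (X : ℕ → Ω → (Fin d → ℤ)) (n : ℕ) (ω : Ω) : Fin d → ℤ :=
  ∑ k ∈ Finset.range n, X k ω

/-- The event `{τ_x > n} = {∀ k ≤ n, x + S(k) ∈ K}`. -/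
def stayEvent {Ω : Type*} {d : ℕ} (X : ℕ → Ω → (Fin d → ℤ))
    (K : Set (EuclideanSpace ℝ (Fin d))) (x : Fin d → ℤ) (n : ℕ) : Set Ω :=
  {ω | ∀ k ≤ n, embZ d (x + walk X k ω) ∈ K}

/-- The event `{τ_x = n}`: the walk stays in `K` strictly before time `n` and exits at `n`. -/
def exitAtEvent {Ω : Type*} {d : ℕ} (X : ℕ → Ω → (Fin d → ℤ))
    (K : Set (EuclideanSpace ℝ (Fin d))) (x : Fin d → ℤ) (n : ℕ) : Set Ω :=
  {ω | (∀ k < n, embZ d (x + walk X k ω) ∈ K) ∧ embZ d (x + walk X n ω) ∉ K}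

lemma walk_meas {Ω : Type*} [MeasurableSpace Ω] {d : ℕ} (X : ℕ → Ω → (Fin d → ℤ))
    (hXmeas : ∀ n, Measurable (X n)) (n : ℕ) : Measurable (walk X n) :=
  Finset.measurable_sum _ fun k _ => hXmeas k

lemma stay_meas {Ω : Type*} [MeasurableSpace Ω] {d : ℕ} (X : ℕ → Ω → (Fin d → ℤ))
    (hXmeas : ∀ n, Measurable (X n)) (K : Set (EuclideanSpace ℝ (Fin d)))
    (z : Fin d → ℤ) (n : ℕ) : MeasurableSet (stayEvent X K z n) := by
  have : stayEvent X K z n =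
      ⋂ k ∈ Finset.range (n+1), walk X k ⁻¹' {w | embZ d (z + w) ∈ K} := by
    ext ω; simp [stayEvent, Nat.lt_succ_iff]
  rw [this]
  exact Finset.measurableSet_biInter _ fun k _ =>
    walk_meas X hXmeas k (Set.to_countable _).measurableSet

lemma exit_eq_diff {Ω : Type*} {d : ℕ} (X : ℕ → Ω → (Fin d → ℤ))
    (K : Set (EuclideanSpace ℝ (Fin d))) (z : Fin d → ℤ) (n : ℕ) :
    exitAtEvent X K z (n+1) = stayEvent X K z n \ stayEvent X K z (n+1) := by
  ext ω
  simp only [exitAtEvent, stayEvent, Set.mem_setOf_eq, Set.mem_diff]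
  constructor
  · rintro ⟨h1, h2⟩
    exact ⟨fun k hk => h1 k (Nat.lt_succ_of_le hk), fun h => h2 (h (n+1) le_rfl)⟩
  · rintro ⟨h1, h2⟩
    refine ⟨fun k hk => h1 k (Nat.lt_succ_iff.mp hk), fun hmem => h2 fun k hk => ?_⟩
    rcases Nat.lt_succ_iff_lt_or_eq.mp (Nat.lt_succ_of_le hk) with h | h
    · exact h1 k (Nat.lt_succ_iff.mp h)
    · rw [h]; exact hmem

lemma stay_antitone {Ω : Type*} {d : ℕ} (X : ℕ → Ω → (Fin d → ℤ))
    (K : Set (EuclideanSpace ℝ (Fin d))) (z : Fin d → ℤ) (n : ℕ) :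
    stayEvent X K z (n+1) ⊆ stayEvent X K z n :=
  fun ω hω k hk => hω k (hk.trans (Nat.le_succ n))

/-- for all `x, y ∈ K∩ℤ^d`, `ℙ(τ_x = n)/ℙ(τ_y = n) → U(x)/U(y)`
(in particular `ℙ(τ_y = n) > 0` for all sufficiently large `n`). -/
theorem stmt5 {d : ℕ} (hd : 1 ≤ d) {Ω : Type*} [MeasurableSpace Ω]
    (P : Measure Ω) [IsProbabilityMeasure P]
    (X : ℕ → Ω → (Fin d → ℤ))
    (hXmeas : ∀ n, Measurable (X n))
    (hXindep : iIndepFun X P)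
    (hXident : ∀ n, IdentDistrib (X n) (X 0) P P)
    (K : Set (EuclideanSpace ℝ (Fin d)))
    (ρ c α : ℝ) (hρ : 0 < ρ) (hc : c ∈ Set.Ioo (0 : ℝ) 1) (hα : 0 < α)
    (U : (Fin d → ℤ) → ℝ) (hU : ∀ z, embZ d z ∈ K → 0 < U z)
    (hasymp : ∀ z : Fin d → ℤ, embZ d z ∈ K →
      Tendsto (fun n : ℕ => (P (stayEvent X K z n)).toReal / (c ^ n * (n : ℝ) ^ (-α : ℝ)))
        atTop (𝓝 (ρ * U z)))
    (x y : Fin d → ℤ) (hx : embZ d x ∈ K) (hy : embZ d y ∈ K) :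
    (∃ N : ℕ, ∀ n ≥ N, 0 < (P (exitAtEvent X K y n)).toReal) ∧
    Tendsto (fun n : ℕ =>
        (P (exitAtEvent X K x n)).toReal / (P (exitAtEvent X K y n)).toReal)
      atTop (𝓝 (U x / U y)) := by
  obtain ⟨hc0, hc1⟩ := hc
  set g : ℕ → ℝ := fun n => c ^ n * (n : ℝ) ^ (-α : ℝ) with hg
  have hgpos : ∀ n : ℕ, 0 < n → 0 < g n := by
    intro n hn
    have hn' : (0:ℝ) < n := by exact_mod_cast hn
    exact mul_pos (pow_pos hc0 n) (Real.rpow_pos_of_pos hn' _)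
  -- ratio of g's tends to c
  have hq : Tendsto (fun n : ℕ => g (n+1) / g n) atTop (𝓝 c) := by
    have h1 : Tendsto (fun n : ℕ => ((n:ℝ)+1)/(n:ℝ)) atTop (𝓝 1) := by
      have h0 : Tendsto (fun n : ℕ => 1 + 1/(n:ℝ)) atTop (𝓝 (1 + 0)) :=
        tendsto_const_nhds.add tendsto_one_div_atTop_nhds_zero_nat
      rw [add_zero] at h0
      apply h0.congr'
      filter_upwards [eventually_gt_atTop 0] with n hn
      have hn' : (0:ℝ) < n := by exact_mod_cast hn
      field_simp
    have hcont : Tendsto (fun t : ℝ => t ^ (-α)) (𝓝 1) (𝓝 ((1:ℝ) ^ (-α))) :=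
      (Real.continuousAt_rpow_const 1 (-α) (Or.inl one_ne_zero)).tendsto
    have h2 := hcont.comp h1
    rw [Real.one_rpow] at h2
    have h3 : Tendsto (fun n : ℕ => c * (((n:ℝ)+1)/(n:ℝ)) ^ (-α)) atTop (𝓝 (c * 1)) :=
      tendsto_const_nhds.mul h2
    rw [mul_one] at h3
    apply h3.congr'
    filter_upwards [eventually_gt_atTop 0] with n hn
    have hn' : (0:ℝ) < n := by exact_mod_cast hn
    have hgn : g n ≠ 0 := (hgpos n hn).ne'
    simp only [hg]
    rw [Real.div_rpow (by positivity) hn'.le]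
    push_cast
    rw [pow_succ]
    field_simp
  -- main limit lemma for exit events
  have key : ∀ z : Fin d → ℤ, embZ d z ∈ K →
      Tendsto (fun n : ℕ => (P (exitAtEvent X K z (n+1))).toReal / g n) atTop
        (𝓝 (ρ * U z * (1 - c))) := by
    intro z hz
    set a : ℕ → ℝ := fun n => (P (stayEvent X K z n)).toReal with ha
    have hlim : Tendsto (fun n => a n / g n) atTop (𝓝 (ρ * U z)) := hasymp z hz
    have hshift : Tendsto (fun n => a (n+1) / g (n+1)) atTop (𝓝 (ρ * U z)) :=
      (tendsto_add_atTop_iff_nat 1).mpr hlim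
    have hdiff : ∀ n : ℕ, (P (exitAtEvent X K z (n+1))).toReal = a n - a (n+1) := by
      intro n
      rw [exit_eq_diff, measure_diff (stay_antitone X K z n)
        (stay_meas X hXmeas K z (n+1)).nullMeasurableSet (measure_ne_top P _),
        ENNReal.toReal_sub_of_le (measure_mono (stay_antitone X K z n)) (measure_ne_top P _)]
    have hcomb : Tendsto (fun n : ℕ => a n / g n - (a (n+1) / g (n+1)) * (g (n+1) / g n))
        atTop (𝓝 (ρ * U z - (ρ * U z) * c)) := hlim.sub (hshift.mul hq)
    have heq : (fun n : ℕ => (P (exitAtEvent X K z (n+1))).toReal / g n) =ᶠ[atTop]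
        (fun n : ℕ => a n / g n - (a (n+1) / g (n+1)) * (g (n+1) / g n)) := by
      filter_upwards [eventually_gt_atTop 0] with n hn
      have hgn : g n ≠ 0 := (hgpos n hn).ne'
      have hgn1 : g (n+1) ≠ 0 := (hgpos (n+1) n.succ_pos).ne'
      rw [hdiff n, sub_div]
      congr 1
      field_simp
    have : (ρ * U z - ρ * U z * c) = ρ * U z * (1 - c) := by ring
    rw [this] at hcomb
    exact hcomb.congr' heq.symm
  have hx' := key x hx
  have hy' := key y hy
  have hLy : 0 < ρ * U y * (1 - c) := by
    have h1 := hU y hy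
    have h2 : (0:ℝ) < 1 - c := by linarith
    positivity
  -- eventually positive
  have hpos : ∀ᶠ n : ℕ in atTop, 0 < (P (exitAtEvent X K y (n+1))).toReal := by
    have hev := hy'.eventually (eventually_gt_nhds (show ρ * U y * (1-c)/2 < ρ * U y * (1-c) by linarith))
    filter_upwards [hev, eventually_gt_atTop 0] with n hn hn0
    have hgn : 0 < g n := hgpos n hn0
    by_contra h
    push_neg at h
    have h0 : (P (exitAtEvent X K y (n+1))).toReal = 0 :=
      le_antisymm h ENNReal.toReal_nonneg
    rw [h0, zero_div] at hn
    linarith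
  constructor
  · obtain ⟨N, hN⟩ := eventually_atTop.mp hpos
    exact ⟨N + 1, fun n hn => by
      obtain ⟨m, rfl⟩ : ∃ m, n = m + 1 := ⟨n - 1, by omega⟩
      exact hN m (by omega)⟩
  · rw [← tendsto_add_atTop_iff_nat 1]
    have hdiv : Tendsto (fun n : ℕ =>
        ((P (exitAtEvent X K x (n+1))).toReal / g n) /
        ((P (exitAtEvent X K y (n+1))).toReal / g n)) atTop
        (𝓝 ((ρ * U x * (1 - c)) / (ρ * U y * (1 - c)))) :=
      hx'.div hy' hLy.ne'
    have hval : (ρ * U x * (1 - c)) / (ρ * U y * (1 - c)) = U x / U y := by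
      have hUy := (hU y hy).ne'
      have h1c : (1:ℝ) - c ≠ 0 := by linarith
      field_simp
    rw [hval] at hdiv
    apply hdiv.congr'
    filter_upwards [hpos, eventually_gt_atTop 0] with n hn hn0
    have hgn : g n ≠ 0 := (hgpos n hn0).ne'
    rw [div_div_div_comm, div_self hgn, div_one]
end
end

section
/- For every finite subset A ⊆ K∩ℤ^d, every x, z ∈ K∩ℤ^d, and every t ∈ (0,1), one has n^α ℙ(x + S(⌊tn⌋) ∈ A | τ_x > n, x + S(n) = z) → (ρ/(t(1−t))^α) Σ_{y∈A} U(y)U'(y) as n → ∞ (the conditional probability is well defined for all sufficiently large n). -/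
open MeasureTheory ProbabilityTheory Filter Topology

noncomputable section

section Aux

variable {Ω : Type*} [MeasurableSpace Ω] {d : ℕ}

/-- The segment of increments `(X m, X (m+1), …, X (m+r-1))`. -/
def seg (X : ℕ → Ω → (Fin d → ℤ)) (m r : ℕ) (ω : Ω) : Fin r → (Fin d → ℤ) :=
  fun j => X (m + j) ω

/-- Extend a finite tuple by zero. -/
def pad {r : ℕ} (v : Fin r → (Fin d → ℤ)) : ℕ → (Fin d → ℤ) :=
  fun j => if h : j < r then v ⟨j, h⟩ else 0

lemma measurable_seg {X : ℕ → Ω → (Fin d → ℤ)} (hXmeas : ∀ n, Measurable (X n))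
    (m r : ℕ) : Measurable (seg X m r) :=
  measurable_pi_lambda _ fun _ => hXmeas _

lemma measurable_walk {X : ℕ → Ω → (Fin d → ℤ)} (hXmeas : ∀ n, Measurable (X n))
    (n : ℕ) : Measurable (walk X n) := by
  have h : walk X n = (fun v : Fin n → (Fin d → ℤ) => ∑ j ∈ Finset.range n, pad v j)
      ∘ seg X 0 n := by
    funext ω
    simp only [walk, Function.comp_apply]
    refine Finset.sum_congr rfl fun j hj => ?_
    rw [Finset.mem_range] at hj
    simp [pad, seg, hj]
  rw [h]
  exact (measurable_of_countable _).comp (measurable_seg hXmeas 0 n)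

lemma measurableSet_stayEvent {X : ℕ → Ω → (Fin d → ℤ)} (hXmeas : ∀ n, Measurable (X n))
    (K : Set (EuclideanSpace ℝ (Fin d))) (x : Fin d → ℤ) (n : ℕ) :
    MeasurableSet (stayEvent X K x n) := by
  have h : stayEvent X K x n
      = ⋂ k, ⋂ (_ : k ≤ n), walk X k ⁻¹' {v | embZ d (x + v) ∈ K} := by
    ext ω; simp [stayEvent]
  rw [h]
  exact MeasurableSet.iInter fun k => MeasurableSet.iInter fun _ =>
    (measurable_walk hXmeas k) (Set.to_countable _).measurableSet

lemma measurableSet_walk_mem {X : ℕ → Ω → (Fin d → ℤ)} (hXmeas : ∀ n, Measurable (X n))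
    (x : Fin d → ℤ) (n : ℕ) (B : Set (Fin d → ℤ)) :
    MeasurableSet {ω | x + walk X n ω ∈ B} := by
  have h : {ω | x + walk X n ω ∈ B} = walk X n ⁻¹' {v | x + v ∈ B} := rfl
  rw [h]
  exact (measurable_walk hXmeas n) (Set.to_countable _).measurableSet

variable (P : Measure Ω) [IsProbabilityMeasure P]
variable {X : ℕ → Ω → (Fin d → ℤ)}

/-- The law of a shifted segment of increments agrees with that of the initial segment:
singleton case. -/
lemma seg_measure_singleton (hXindep : iIndepFun X P)
    (hXident : ∀ n, IdentDistrib (X n) (X 0) P P)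
    (m r : ℕ) (b : Fin r → (Fin d → ℤ)) :
    P {ω | seg X m r ω = b} = P {ω | seg X 0 r ω = b} := by
  classical
  set bb : ℕ → (Fin d → ℤ) := fun i => if h : i < r then b ⟨i, h⟩ else 0 with hbb
  have key : ∀ m : ℕ, P {ω | seg X m r ω = b}
      = ∏ i ∈ Finset.range r, P (X 0 ⁻¹' {bb i}) := by
    intro m
    have hset : {ω | seg X m r ω = b}
        = ⋂ i ∈ Finset.Ico m (m + r), X i ⁻¹' {bb (i - m)} := by
      ext ω
      simp only [Set.mem_setOf_eq, Set.mem_iInter, Finset.mem_Ico,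
        Set.mem_preimage, Set.mem_singleton_iff]
      constructor
      · rintro h i ⟨h1, h2⟩
        have hlt : i - m < r := by omega
        have hx : X i ω = seg X m r ω ⟨i - m, hlt⟩ := by
          have hi : i = m + (i - m) := by omega
          conv_lhs => rw [hi]
          rfl
        rw [hx, h, hbb]
        simp [hlt]
      · intro h
        funext j
        have h2 := h (m + (j : ℕ)) ⟨by omega, by omega⟩
        rw [hbb] at h2
        have hm : m + (j : ℕ) - m = (j : ℕ) := by omega
        rw [hm] at h2
        simpa [seg, j.isLt] using h2
    rw [hset, hXindep.measure_inter_preimage_eq_mul _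
      (fun i _ => measurableSet_singleton _), Finset.prod_Ico_eq_prod_range]
    simp only [Nat.add_sub_cancel_left]
    exact Finset.prod_congr rfl fun i _ =>
      (hXident (m + i)).measure_mem_eq (measurableSet_singleton _)
  rw [key m, key 0]

/-- The law of a shifted segment of increments agrees with that of the initial segment. -/
lemma seg_measure_eq (hXmeas : ∀ n, Measurable (X n))
    (hXindep : iIndepFun X P)
    (hXident : ∀ n, IdentDistrib (X n) (X 0) P P)
    (m r : ℕ) (B : Set (Fin r → (Fin d → ℤ))) :
    P (seg X m r ⁻¹' B) = P (seg X 0 r ⁻¹' B) := by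
  have hdec : ∀ m : ℕ, seg X m r ⁻¹' B = ⋃ b : B, {ω | seg X m r ω = (b : _)} := by
    intro m; ext ω
    simp only [Set.mem_preimage, Set.mem_iUnion, Set.mem_setOf_eq]
    exact ⟨fun h => ⟨⟨_, h⟩, rfl⟩, by rintro ⟨⟨b, hb⟩, h⟩; rw [h]; exact hb⟩
  have hdisj : ∀ m : ℕ, Pairwise (Function.onFun Disjoint
      fun b : B => {ω | seg X m r ω = (b : _)}) := by
    intro m b b' hne
    refine Set.disjoint_left.2 fun ω h1 h2 => hne ?_
    exact Subtype.ext (h1.symm.trans h2)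
  have hms : ∀ m : ℕ, ∀ b : B, MeasurableSet {ω | seg X m r ω = (b : _)} := by
    intro m b
    exact (measurable_seg hXmeas m r) (measurableSet_singleton _)
  rw [hdec m, hdec 0, measure_iUnion (hdisj m) (hms m), measure_iUnion (hdisj 0) (hms 0)]
  exact tsum_congr fun b => seg_measure_singleton P hXindep hXident m r _

lemma sum_pad_seg (m r k : ℕ) (hk : k ≤ r) (ω : Ω) :
    ∑ j ∈ Finset.range k, pad (seg X m r ω) j = ∑ j ∈ Finset.range k, X (m + j) ω := by
  refine Finset.sum_congr rfl fun j hj => ?_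
  rw [Finset.mem_range] at hj
  have hjr : j < r := lt_of_lt_of_le hj hk
  simp [pad, seg, hjr]

/-- Markov splitting: the probability of the bridge event factorizes. -/
lemma split_measure (hXmeas : ∀ n, Measurable (X n))
    (hXindep : iIndepFun X P)
    (hXident : ∀ n, IdentDistrib (X n) (X 0) P P)
    (K : Set (EuclideanSpace ℝ (Fin d))) (x y z : Fin d → ℤ) (m r : ℕ) :
    P ({ω | x + walk X m ω = y} ∩
        ({ω | x + walk X (m + r) ω = z} ∩ stayEvent X K x (m + r)))
      = P ({ω | x + walk X m ω = y} ∩ stayEvent X K x m)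
        * P ({ω | y + walk X r ω = z} ∩ stayEvent X K y r) := by
  classical
  set C : Set (Fin m → (Fin d → ℤ)) :=
    {v | x + ∑ j ∈ Finset.range m, pad v j = y ∧
      ∀ k ≤ m, embZ d (x + ∑ j ∈ Finset.range k, pad v j) ∈ K} with hC
  set B : Set (Fin r → (Fin d → ℤ)) :=
    {v | (∀ k ≤ r, embZ d (y + ∑ j ∈ Finset.range k, pad v j) ∈ K) ∧
      y + ∑ j ∈ Finset.range r, pad v j = z} with hB
  -- identification of E1
  have hE1 : seg X 0 m ⁻¹' C = {ω | x + walk X m ω = y} ∩ stayEvent X K x m := by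
    ext ω
    have hsum : ∀ k ≤ m, ∑ j ∈ Finset.range k, pad (seg X 0 m ω) j = walk X k ω := by
      intro k hk
      rw [sum_pad_seg 0 m k hk ω]
      simp [walk]
    simp only [Set.mem_preimage, hC, Set.mem_setOf_eq, Set.mem_inter_iff, stayEvent]
    constructor
    · rintro ⟨h1, h2⟩
      rw [hsum m le_rfl] at h1
      exact ⟨h1, fun k hk => by rw [← hsum k hk]; exact h2 k hk⟩
    · rintro ⟨h1, h2⟩
      exact ⟨by rw [hsum m le_rfl]; exact h1, fun k hk => by rw [hsum k hk]; exact h2 k hk⟩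
  -- identification of E2 (at shift 0)
  have hE2 : seg X 0 r ⁻¹' B = {ω | y + walk X r ω = z} ∩ stayEvent X K y r := by
    ext ω
    have hsum : ∀ k ≤ r, ∑ j ∈ Finset.range k, pad (seg X 0 r ω) j = walk X k ω := by
      intro k hk
      rw [sum_pad_seg 0 r k hk ω]
      simp [walk]
    simp only [Set.mem_preimage, hB, Set.mem_setOf_eq, Set.mem_inter_iff, stayEvent]
    constructor
    · rintro ⟨h1, h2⟩
      rw [hsum r le_rfl] at h2
      exact ⟨h2, fun k hk => by rw [← hsum k hk]; exact h1 k hk⟩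
    · rintro ⟨h1, h2⟩
      exact ⟨fun k hk => by rw [hsum k hk]; exact h2 k hk, by rw [hsum r le_rfl]; exact h1⟩
  -- the combinatorial splitting of the bridge event
  have hsplit : {ω | x + walk X m ω = y} ∩
      ({ω | x + walk X (m + r) ω = z} ∩ stayEvent X K x (m + r))
      = (seg X 0 m ⁻¹' C) ∩ (seg X m r ⁻¹' B) := by
    rw [hE1]
    ext ω
    have hsum : ∀ k ≤ r, ∑ j ∈ Finset.range k, pad (seg X m r ω) j
        = ∑ j ∈ Finset.range k, X (m + j) ω := fun k hk => sum_pad_seg m r k hk ω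
    have hwalk : ∀ k, walk X (m + k) ω = walk X m ω + ∑ j ∈ Finset.range k, X (m + j) ω :=
      fun k => Finset.sum_range_add (fun i => X i ω) m k
    simp only [Set.mem_inter_iff, Set.mem_setOf_eq, stayEvent, Set.mem_preimage, hB]
    constructor
    · rintro ⟨h1, h2, h3⟩
      refine ⟨⟨h1, fun k hk => h3 k (le_trans hk (Nat.le_add_right m r))⟩, ?_, ?_⟩
      · intro k hk
        rw [hsum k hk]
        have : y + ∑ j ∈ Finset.range k, X (m + j) ω = x + walk X (m + k) ω := by
          rw [hwalk k, ← h1]; abel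
        rw [this]
        exact h3 (m + k) (by omega)
      · rw [hsum r le_rfl]
        have : y + ∑ j ∈ Finset.range r, X (m + j) ω = x + walk X (m + r) ω := by
          rw [hwalk r, ← h1]; abel
        rw [this]; exact h2
    · rintro ⟨⟨h1, h2⟩, h3, h4⟩
      rw [hsum r le_rfl] at h4
      have hxz : x + walk X (m + r) ω = z := by
        rw [hwalk r, ← h4, ← h1]; abel
      refine ⟨h1, hxz, fun k hk => ?_⟩
      rcases le_or_gt k m with hkm | hkm
      · exact h2 k hkm
      · have hk' : k = m + (k - m) := by omega
        have h5 := h3 (k - m) (by omega)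
        rw [hsum (k - m) (by omega)] at h5
        have hw := hwalk (k - m)
        rw [show m + (k - m) = k by omega] at hw
        have : x + walk X k ω = y + ∑ j ∈ Finset.range (k - m), X (m + j) ω := by
          rw [hw, ← h1]; abel
        rw [this]; exact h5
  -- independence
  have hind : IndepFun (seg X 0 m) (seg X m r) P := by
    have hdisj : Disjoint (Finset.range m) (Finset.Ico m (m + r)) := by
      simp only [Finset.disjoint_left, Finset.mem_range, Finset.mem_Ico]
      omega
    have h := hXindep.indepFun_finset (Finset.range m) (Finset.Ico m (m + r)) hdisj hXmeas
    have hφ : Measurable fun (v : ↥(Finset.range m) → (Fin d → ℤ)) =>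
        (fun j : Fin m => v ⟨(j : ℕ), Finset.mem_range.2 j.isLt⟩) :=
      measurable_pi_lambda _ fun j => measurable_pi_apply _
    have hψ : Measurable fun (v : ↥(Finset.Ico m (m + r)) → (Fin d → ℤ)) =>
        (fun j : Fin r => v ⟨m + (j : ℕ), Finset.mem_Ico.2 ⟨by omega, by omega⟩⟩) :=
      measurable_pi_lambda _ fun j => measurable_pi_apply _
    have h2 := h.comp hφ hψ
    have e1 : (fun v : ↥(Finset.range m) → (Fin d → ℤ) =>
          fun j : Fin m => v ⟨(j : ℕ), Finset.mem_range.2 j.isLt⟩)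
        ∘ (fun a (i : ↥(Finset.range m)) => X i a) = seg X 0 m := by
      funext ω j; simp [seg]
    have e2 : (fun v : ↥(Finset.Ico m (m + r)) → (Fin d → ℤ) =>
          fun j : Fin r => v ⟨m + (j : ℕ), Finset.mem_Ico.2 ⟨by omega, by omega⟩⟩)
        ∘ (fun a (i : ↥(Finset.Ico m (m + r))) => X i a) = seg X m r := by
      funext ω j; simp [seg]
    rwa [e1, e2] at h2
  rw [hsplit, hind.measure_inter_preimage_eq_mul C B
      (C.to_countable.measurableSet) (B.to_countable.measurableSet),
    seg_measure_eq P hXmeas hXindep hXident m r B, hE1, hE2]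

/-- Decomposition of the numerator over the points of `A`. -/
lemma numerator_eq (hXmeas : ∀ n, Measurable (X n))
    (hXindep : iIndepFun X P)
    (hXident : ∀ n, IdentDistrib (X n) (X 0) P P)
    (K : Set (EuclideanSpace ℝ (Fin d))) (A : Finset (Fin d → ℤ)) (x z : Fin d → ℤ)
    (m r : ℕ) :
    P ({ω | x + walk X m ω ∈ A} ∩
        ({ω | x + walk X (m + r) ω = z} ∩ stayEvent X K x (m + r)))
      = ∑ y ∈ A, P ({ω | x + walk X m ω = y} ∩ stayEvent X K x m)
          * P ({ω | y + walk X r ω = z} ∩ stayEvent X K y r) := by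
  classical
  have hun : {ω | x + walk X m ω ∈ A} ∩
      ({ω | x + walk X (m + r) ω = z} ∩ stayEvent X K x (m + r))
      = ⋃ y ∈ A, ({ω | x + walk X m ω = y} ∩
          ({ω | x + walk X (m + r) ω = z} ∩ stayEvent X K x (m + r))) := by
    ext ω
    simp only [Set.mem_inter_iff, Set.mem_setOf_eq, Set.mem_iUnion]
    constructor
    · rintro ⟨h1, h2⟩; exact ⟨_, h1, rfl, h2⟩
    · rintro ⟨y, hy, h1, h2⟩; exact ⟨h1 ▸ hy, h2⟩
  rw [hun, measure_biUnion_finset]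
  · exact Finset.sum_congr rfl fun y _ =>
      split_measure P hXmeas hXindep hXident K x y z m r
  · intro a ha b hb hab
    refine Set.disjoint_left.2 fun ω h1 h2 => hab ?_
    exact h1.1.symm.trans h2.1
  · intro y _
    exact ((measurableSet_walk_mem hXmeas x m {y}).inter
      ((measurableSet_walk_mem hXmeas x (m + r) {z}).inter
        (measurableSet_stayEvent hXmeas K x (m + r))))

end Aux

/-- bridges: for every finite `A ⊆ K∩ℤ^d`, `x, z ∈ K∩ℤ^d` and `t ∈ (0,1)`,
`n^α ℙ(x + S(⌊tn⌋) ∈ A | τ_x > n, x + S(n) = z) → (ρ/(t(1−t))^α) Σ_{y∈A} U(y)U'(y)`,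
the conditional probability being well defined for all large `n`. -/
theorem stmt12 {d : ℕ} (hd : 1 ≤ d) {Ω : Type*} [MeasurableSpace Ω]
    (P : Measure Ω) [IsProbabilityMeasure P]
    (X : ℕ → Ω → (Fin d → ℤ))
    (hXmeas : ∀ n, Measurable (X n))
    (hXindep : iIndepFun X P)
    (hXident : ∀ n, IdentDistrib (X n) (X 0) P P)
    (K : Set (EuclideanSpace ℝ (Fin d)))
    (ρ c α : ℝ) (hρ : 0 < ρ) (hc : c ∈ Set.Ioo (0 : ℝ) 1) (hα : 0 < α)
    (U U' : (Fin d → ℤ) → ℝ)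
    (hU : ∀ z, embZ d z ∈ K → 0 < U z) (hU' : ∀ z, embZ d z ∈ K → 0 < U' z)
    (hi : ∀ x z : Fin d → ℤ, embZ d x ∈ K → embZ d z ∈ K →
      Tendsto (fun n : ℕ => (n : ℝ) ^ (α : ℝ) / c ^ n *
          (P ({ω | x + walk X n ω = z} ∩ stayEvent X K x n)).toReal)
        atTop (𝓝 (ρ * U x * U' z)))
    (A : Finset (Fin d → ℤ)) (hA : ∀ y ∈ A, embZ d y ∈ K)
    (x z : Fin d → ℤ) (hx : embZ d x ∈ K) (hz : embZ d z ∈ K)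
    (t : ℝ) (ht : t ∈ Set.Ioo (0 : ℝ) 1) :
    (∃ N : ℕ, ∀ n ≥ N,
      0 < (P ({ω | x + walk X n ω = z} ∩ stayEvent X K x n)).toReal) ∧
    Tendsto (fun n : ℕ => (n : ℝ) ^ (α : ℝ) *
        ((P ({ω | x + walk X (⌊t * n⌋₊) ω ∈ A} ∩
            ({ω | x + walk X n ω = z} ∩ stayEvent X K x n))).toReal /
          (P ({ω | x + walk X n ω = z} ∩ stayEvent X K x n)).toReal))
      atTop (𝓝 (ρ / (t * (1 - t)) ^ (α : ℝ) * ∑ y ∈ A, U y * U' y)) := by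
  classical
  obtain ⟨ht0, ht1⟩ := ht
  obtain ⟨hc0, hc1⟩ := hc
  have h1t : 0 < 1 - t := by linarith
  -- abbreviations
  set h : ℕ → ℝ :=
    fun n => (P ({ω | x + walk X n ω = z} ∩ stayEvent X K x n)).toReal with hh
  set f : (Fin d → ℤ) → ℕ → ℝ :=
    fun y k => (P ({ω | x + walk X k ω = y} ∩ stayEvent X K x k)).toReal with hf
  set g : (Fin d → ℤ) → ℕ → ℝ :=
    fun y k => (P ({ω | y + walk X k ω = z} ∩ stayEvent X K y k)).toReal with hg
  -- the denominator limit
  have hD : Tendsto (fun n : ℕ => (n : ℝ) ^ (α : ℝ) / c ^ n * h n) atTop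
      (𝓝 (ρ * U x * U' z)) := hi x z hx hz
  have hDpos : 0 < ρ * U x * U' z := mul_pos (mul_pos hρ (hU x hx)) (hU' z hz)
  have hevent : ∀ᶠ n : ℕ in atTop, 0 < h n := by
    filter_upwards [hD.eventually (eventually_gt_nhds hDpos)] with n hn
    by_contra hcon
    push_neg at hcon
    have h0 : h n = 0 := le_antisymm hcon ENNReal.toReal_nonneg
    rw [h0, mul_zero] at hn
    exact lt_irrefl _ hn
  constructor
  · rw [eventually_atTop] at hevent
    obtain ⟨N, hN⟩ := hevent
    exact ⟨N, hN⟩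
  -- floor quantities
  have hmle : ∀ n : ℕ, ⌊t * (n : ℝ)⌋₊ ≤ n := by
    intro n
    have : t * (n : ℝ) ≤ ((n : ℕ) : ℝ) :=
      mul_le_of_le_one_left (Nat.cast_nonneg n) ht1.le
    calc ⌊t * (n : ℝ)⌋₊ ≤ ⌊((n : ℕ) : ℝ)⌋₊ := Nat.floor_mono this
    _ = n := Nat.floor_natCast n
  -- limits of the index functions
  have hm_top : Tendsto (fun n : ℕ => ⌊t * (n : ℝ)⌋₊) atTop atTop :=
    tendsto_nat_floor_atTop.comp
      (Tendsto.const_mul_atTop ht0 tendsto_natCast_atTop_atTop)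
  have hr_real : Tendsto (fun n : ℕ => ((n - ⌊t * (n : ℝ)⌋₊ : ℕ) : ℝ)) atTop atTop := by
    refine tendsto_atTop_mono' atTop ?_ (Tendsto.const_mul_atTop h1t tendsto_natCast_atTop_atTop)
    filter_upwards with n
    rw [Nat.cast_sub (hmle n)]
    have h1 : (⌊t * (n : ℝ)⌋₊ : ℝ) ≤ t * n := Nat.floor_le (by positivity)
    have h2 : (1 - t) * n = n - t * n := by ring
    linarith
  have hr_top : Tendsto (fun n : ℕ => n - ⌊t * (n : ℝ)⌋₊) atTop atTop :=
    tendsto_natCast_atTop_iff.mp hr_real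
  have hmn : Tendsto (fun n : ℕ => (⌊t * (n : ℝ)⌋₊ : ℝ) / n) atTop (𝓝 t) :=
    (tendsto_nat_floor_mul_div_atTop ht0.le).comp tendsto_natCast_atTop_atTop
  have hrn : Tendsto (fun n : ℕ => ((n - ⌊t * (n : ℝ)⌋₊ : ℕ) : ℝ) / n) atTop (𝓝 (1 - t)) := by
    refine Tendsto.congr' ?_ (tendsto_const_nhds.sub hmn)
    filter_upwards [eventually_ge_atTop 1] with n hn
    have hn0 : (n : ℝ) ≠ 0 := by
      simpa using Nat.one_le_iff_ne_zero.mp hn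
    rw [Nat.cast_sub (hmle n), sub_div, div_self hn0]
  have hG1 : Tendsto (fun n : ℕ => ((⌊t * (n : ℝ)⌋₊ : ℝ) / n)⁻¹ ^ (α : ℝ)) atTop
      (𝓝 (t⁻¹ ^ (α : ℝ))) :=
    Filter.Tendsto.rpow_const (hmn.inv₀ ht0.ne') (Or.inr hα.le)
  have hG2 : Tendsto (fun n : ℕ => (((n - ⌊t * (n : ℝ)⌋₊ : ℕ) : ℝ) / n)⁻¹ ^ (α : ℝ)) atTop
      (𝓝 ((1 - t)⁻¹ ^ (α : ℝ))) :=
    Filter.Tendsto.rpow_const (hrn.inv₀ h1t.ne') (Or.inr hα.le)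
  -- per-point limits
  have hterm : ∀ y ∈ A, Tendsto (fun n : ℕ =>
      ((⌊t * (n : ℝ)⌋₊ : ℝ) ^ (α : ℝ) / c ^ (⌊t * (n : ℝ)⌋₊) * f y (⌊t * (n : ℝ)⌋₊))
      * (((n - ⌊t * (n : ℝ)⌋₊ : ℕ) : ℝ) ^ (α : ℝ) / c ^ (n - ⌊t * (n : ℝ)⌋₊)
          * g y (n - ⌊t * (n : ℝ)⌋₊))
      / ((n : ℝ) ^ (α : ℝ) / c ^ n * h n)
      * (((⌊t * (n : ℝ)⌋₊ : ℝ) / n)⁻¹ ^ (α : ℝ)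
          * ((((n - ⌊t * (n : ℝ)⌋₊ : ℕ) : ℝ) / n)⁻¹ ^ (α : ℝ)))) atTop
      (𝓝 (ρ / (t * (1 - t)) ^ (α : ℝ) * (U y * U' y))) := by
    intro y hy
    have hF1 : Tendsto (fun n : ℕ =>
        (⌊t * (n : ℝ)⌋₊ : ℝ) ^ (α : ℝ) / c ^ (⌊t * (n : ℝ)⌋₊) * f y (⌊t * (n : ℝ)⌋₊))
        atTop (𝓝 (ρ * U x * U' y)) := (hi x y hx (hA y hy)).comp hm_top
    have hF2 : Tendsto (fun n : ℕ =>
        ((n - ⌊t * (n : ℝ)⌋₊ : ℕ) : ℝ) ^ (α : ℝ) / c ^ (n - ⌊t * (n : ℝ)⌋₊)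
          * g y (n - ⌊t * (n : ℝ)⌋₊))
        atTop (𝓝 (ρ * U y * U' z)) := (hi y z (hA y hy) hz).comp hr_top
    have hlim := (((hF1.mul hF2).div hD hDpos.ne').mul (hG1.mul hG2))
    have heq : ρ * U x * U' y * (ρ * U y * U' z) / (ρ * U x * U' z)
        * (t⁻¹ ^ (α : ℝ) * (1 - t)⁻¹ ^ (α : ℝ))
        = ρ / (t * (1 - t)) ^ (α : ℝ) * (U y * U' y) := by
      rw [Real.inv_rpow ht0.le, Real.inv_rpow h1t.le, Real.mul_rpow ht0.le h1t.le]
      have h1 : (0 : ℝ) < t ^ (α : ℝ) := Real.rpow_pos_of_pos ht0 _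
      have h2 : (0 : ℝ) < (1 - t) ^ (α : ℝ) := Real.rpow_pos_of_pos h1t _
      have h3 : U x ≠ 0 := (hU x hx).ne'
      have h4 : U' z ≠ 0 := (hU' z hz).ne'
      field_simp
    rwa [heq] at hlim
  -- sum of limits
  have hsum := tendsto_finset_sum A hterm
  rw [← Finset.mul_sum] at hsum
  refine Tendsto.congr' ?_ hsum
  -- eventual equality
  filter_upwards [hevent, hm_top.eventually_ge_atTop 1, hr_top.eventually_ge_atTop 1,
    eventually_ge_atTop 1] with n hpos hm1 hr1 hn1
  have hmr : ⌊t * (n : ℝ)⌋₊ + (n - ⌊t * (n : ℝ)⌋₊) = n := by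
    have := hmle n; omega
  -- numerator decomposition
  have hnum := numerator_eq P hXmeas hXindep hXident K A x z (⌊t * (n : ℝ)⌋₊)
    (n - ⌊t * (n : ℝ)⌋₊)
  rw [hmr] at hnum
  have hnumr : (P ({ω | x + walk X (⌊t * (n : ℝ)⌋₊) ω ∈ A} ∩
      ({ω | x + walk X n ω = z} ∩ stayEvent X K x n))).toReal
      = ∑ y ∈ A, f y (⌊t * (n : ℝ)⌋₊) * g y (n - ⌊t * (n : ℝ)⌋₊) := by
    rw [hnum, ENNReal.toReal_sum (fun y _ =>
      ENNReal.mul_ne_top (measure_ne_top P _) (measure_ne_top P _))]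
    exact Finset.sum_congr rfl fun y _ => ENNReal.toReal_mul
  rw [hnumr, Finset.sum_div, Finset.mul_sum]
  refine Finset.sum_congr rfl fun y _ => ?_
  -- pointwise algebra
  have hM0 : (0 : ℝ) < (⌊t * (n : ℝ)⌋₊ : ℝ) := by
    exact_mod_cast Nat.lt_of_lt_of_le Nat.zero_lt_one hm1
  have hR0 : (0 : ℝ) < ((n - ⌊t * (n : ℝ)⌋₊ : ℕ) : ℝ) := by
    exact_mod_cast Nat.lt_of_lt_of_le Nat.zero_lt_one hr1
  have hN0 : (0 : ℝ) < (n : ℝ) := by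
    exact_mod_cast Nat.lt_of_lt_of_le Nat.zero_lt_one hn1
  have hcn : (c : ℝ) ^ n = c ^ (⌊t * (n : ℝ)⌋₊) * c ^ (n - ⌊t * (n : ℝ)⌋₊) := by
    rw [← pow_add, hmr]
  rw [hcn, inv_div, inv_div, Real.div_rpow hN0.le hM0.le, Real.div_rpow hN0.le hR0.le]
  have p1 : (0 : ℝ) < (⌊t * (n : ℝ)⌋₊ : ℝ) ^ (α : ℝ) := Real.rpow_pos_of_pos hM0 _
  have p2 : (0 : ℝ) < ((n - ⌊t * (n : ℝ)⌋₊ : ℕ) : ℝ) ^ (α : ℝ) := Real.rpow_pos_of_pos hR0 _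
  have p3 : (0 : ℝ) < (n : ℝ) ^ (α : ℝ) := Real.rpow_pos_of_pos hN0 _
  have p4 : (0 : ℝ) < c ^ (⌊t * (n : ℝ)⌋₊) := pow_pos hc0 _
  have p5 : (0 : ℝ) < c ^ (n - ⌊t * (n : ℝ)⌋₊) := pow_pos hc0 _
  rw [show (P ({ω | x + walk X n ω = z} ∩ stayEvent X K x n)).toReal = h n from rfl]
  field_simp
end
end

section
/- There exists a constant C > 0 such that for every x ∈ K∩ℤ^d and every n ≥ 1, ℙ(τ_x > n) ≤ C(1+|x|^p) n^{−p/2}. -/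
open MeasureTheory ProbabilityTheory Filter Topology
open scoped Classical

noncomputable section

/-- The set `K_{n,ε} = {x ∈ K : dist(x, ∂K) ≥ n^{1/2−ε}}`. -/
def Kne {d : ℕ} (K : Set (EuclideanSpace ℝ (Fin d))) (ε : ℝ) (n : ℕ) :
    Set (EuclideanSpace ℝ (Fin d)) :=
  {z ∈ K | (n : ℝ) ^ ((1 : ℝ) / 2 - ε) ≤ Metric.infDist z (frontier K)}

section Aux

set_option linter.unusedSectionVars false

variable {d : ℕ} {Ω : Type*} [MeasurableSpace Ω] {P : Measure Ω} {X : ℕ → Ω → (Fin d → ℤ)}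

lemma walk_meas_s18 (hX : ∀ n, Measurable (X n)) (n : ℕ) : Measurable (walk X n) := by
  unfold walk
  exact Finset.measurable_sum _ (fun k _ => hX k)

lemma walk_add (k i : ℕ) (ω : Ω) :
    walk X (k + i) ω = walk X k ω + ∑ j ∈ Finset.range i, X (k + j) ω := by
  unfold walk; exact Finset.sum_range_add (fun j => X j ω) k i

/-- extension of a finite tuple by zero -/
def extt {E : Type*} [Zero E] {m : ℕ} (v : Fin m → E) : ℕ → E :=
  fun j => if h : j < m then v ⟨j, h⟩ else 0

/-- partial sums of a tuple -/
def psum {d : ℕ} {m : ℕ} (v : Fin m → (Fin d → ℤ)) (i : ℕ) : Fin d → ℤ :=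
  ∑ j ∈ Finset.range i, extt v j

/-- the tuple of increments `(X a, ..., X (a+m-1))` -/
def tup {Ω : Type*} {d : ℕ} (X : ℕ → Ω → (Fin d → ℤ)) (a m : ℕ) : Ω → (Fin m → (Fin d → ℤ)) :=
  fun ω i => X (a + i) ω

lemma tup_meas (hX : ∀ n, Measurable (X n)) (a m : ℕ) : Measurable (tup X a m) :=
  measurable_pi_lambda _ (fun i => hX (a + i))

lemma psum_tup (a m : ℕ) (ω : Ω) {i : ℕ} (hi : i ≤ m) :
    psum (tup X a m ω) i = ∑ j ∈ Finset.range i, X (a + j) ω := by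
  unfold psum
  refine Finset.sum_congr rfl (fun j hj => ?_)
  have hjm : j < m := lt_of_lt_of_le (Finset.mem_range.1 hj) hi
  simp [extt, hjm, tup]

lemma psum_tup_zero (k : ℕ) (ω : Ω) {j : ℕ} (hj : j ≤ k) :
    psum (tup X 0 k ω) j = walk X j ω := by
  rw [psum_tup 0 k ω hj]
  unfold walk
  exact Finset.sum_congr rfl (fun j' _ => by rw [Nat.zero_add])

lemma measure_tup_preimage (hXmeas : ∀ n, Measurable (X n))
    (hXindep : iIndepFun X P) (a m : ℕ)
    (T : Set (Fin m → (Fin d → ℤ))) :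
    P (tup X a m ⁻¹' T) =
      ∑' v : T, ∏ i ∈ Finset.range m, P (X (a + i) ⁻¹' {extt (v : Fin m → (Fin d → ℤ)) i}) := by
  have hrepr : tup X a m ⁻¹' T =
      ⋃ v : T, ⋂ j ∈ Finset.Ico a (a + m),
        X j ⁻¹' {extt (v : Fin m → (Fin d → ℤ)) (j - a)} := by
    ext ω
    simp only [Set.mem_preimage, Set.mem_iUnion, Set.mem_iInter, Set.mem_preimage,
      Set.mem_singleton_iff, Finset.mem_Ico]
    constructor
    · intro h
      refine ⟨⟨tup X a m ω, h⟩, fun j hj => ?_⟩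
      have hja : j - a < m := by omega
      simp only [extt, hja, dif_pos]
      have : a + (j - a) = j := by omega
      simp [tup, this]
    · rintro ⟨v, hv⟩
      have : tup X a m ω = (v : Fin m → (Fin d → ℤ)) := by
        funext i
        have h1 := hv (a + i) ⟨Nat.le_add_right _ _, by omega⟩
        have h2 : (a + (i : ℕ)) - a = (i : ℕ) := by omega
        rw [h2] at h1
        simpa [tup, extt, i.isLt] using h1
      exact Set.mem_preimage.2 (this ▸ v.2)
  rw [hrepr, measure_iUnion]
  · refine tsum_congr (fun v => ?_)
    rw [hXindep.measure_inter_preimage_eq_mul (Finset.Ico a (a + m))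
      (sets := fun j => {extt (v : Fin m → (Fin d → ℤ)) (j - a)})
      (fun i _ => measurableSet_singleton _)]
    rw [Finset.prod_Ico_eq_prod_range]
    have : a + m - a = m := by omega
    rw [this]
    refine Finset.prod_congr rfl (fun i _ => ?_)
    have h2 : a + i - a = i := by omega
    rw [h2]
  · intro v w hvw
    have : ∃ i : Fin m, (v : Fin m → (Fin d → ℤ)) i ≠ (w : Fin m → (Fin d → ℤ)) i := by
      by_contra h
      push_neg at h
      exact hvw (Subtype.ext (funext h))
    obtain ⟨i, hi⟩ := this
    refine Set.disjoint_left.2 (fun ω hω hω' => ?_)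
    have h1 := Set.mem_iInter₂.1 hω (a + i) (by simp [Finset.mem_Ico])
    have h2 := Set.mem_iInter₂.1 hω' (a + i) (by simp [Finset.mem_Ico])
    rw [Set.mem_preimage, Set.mem_singleton_iff] at h1 h2
    apply hi
    have h3 : (a + (i : ℕ)) - a = (i : ℕ) := by omega
    rw [h3] at h1 h2
    simp only [extt, i.isLt, dif_pos] at h1 h2
    rw [← h1, ← h2]
  · intro v
    exact MeasurableSet.biInter (Finset.Ico a (a+m)).countable_toSet
      (fun j _ => (hXmeas j) (measurableSet_singleton _))

lemma lawShift (hXmeas : ∀ n, Measurable (X n))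
    (hXindep : iIndepFun X P)
    (hXident : ∀ n, IdentDistrib (X n) (X 0) P P) (a m : ℕ)
    (T : Set (Fin m → (Fin d → ℤ))) :
    P (tup X a m ⁻¹' T) = P (tup X 0 m ⁻¹' T) := by
  rw [measure_tup_preimage hXmeas hXindep, measure_tup_preimage hXmeas hXindep]
  refine tsum_congr (fun v => Finset.prod_congr rfl (fun i _ => ?_))
  rw [(hXident (a + i)).measure_mem_eq (measurableSet_singleton _),
    (hXident (0 + i)).measure_mem_eq (measurableSet_singleton _)]

lemma indepSplit (hXmeas : ∀ n, Measurable (X n))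
    (hXindep : iIndepFun X P) (k m : ℕ)
    (SA : Set (Fin k → (Fin d → ℤ))) (TB : Set (Fin m → (Fin d → ℤ))) :
    P (tup X 0 k ⁻¹' SA ∩ tup X k m ⁻¹' TB) =
      P (tup X 0 k ⁻¹' SA) * P (tup X k m ⁻¹' TB) := by
  have hdisj : Disjoint (Finset.range k) (Finset.Ico k (k + m)) := by
    simp [Finset.disjoint_left, Finset.mem_range, Finset.mem_Ico]
    omega
  have hind := hXindep.indepFun_finset (Finset.range k) (Finset.Ico k (k + m)) hdisj hXmeas
  set U : Ω → ({i // i ∈ Finset.range k} → (Fin d → ℤ)) :=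
    fun ω i => X i ω with hU
  set V : Ω → ({i // i ∈ Finset.Ico k (k + m)} → (Fin d → ℤ)) :=
    fun ω i => X i ω with hV
  set r1 : ({i // i ∈ Finset.range k} → (Fin d → ℤ)) → (Fin k → (Fin d → ℤ)) :=
    fun f i => f ⟨(i : ℕ), Finset.mem_range.2 i.isLt⟩ with hr1
  set r2 : ({i // i ∈ Finset.Ico k (k + m)} → (Fin d → ℤ)) → (Fin m → (Fin d → ℤ)) :=
    fun f i => f ⟨k + (i : ℕ), by simp [Finset.mem_Ico]⟩ with hr2
  have hA : tup X 0 k ⁻¹' SA = U ⁻¹' (r1 ⁻¹' SA) := by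
    ext ω
    simp only [Set.mem_preimage]
    have : r1 (U ω) = tup X 0 k ω := by
      funext i; simp [hr1, hU, tup]
    rw [this]
  have hB : tup X k m ⁻¹' TB = V ⁻¹' (r2 ⁻¹' TB) := by
    ext ω
    simp only [Set.mem_preimage]
    have : r2 (V ω) = tup X k m ω := by
      funext i; simp [hr2, hV, tup]
    rw [this]
  rw [hA, hB]
  exact hind.measure_inter_preimage_eq_mul _ _
    (Set.to_countable _).measurableSet (Set.to_countable _).measurableSet

lemma expBound {p ε C₂ c₂ : ℝ} (hε0 : 0 < ε) (hc₂ : 0 < c₂) :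
    ∃ C' : ℝ, 0 < C' ∧ ∀ n : ℕ, 1 ≤ n →
      C₂ * Real.exp (-c₂ * (n : ℝ) ^ (ε : ℝ)) ≤ C' * (n : ℝ) ^ (-(p / 2) : ℝ) := by
  set f : ℕ → ℝ := fun n => C₂ * ((n : ℝ) ^ (p / 2) * Real.exp (-c₂ * (n : ℝ) ^ (ε : ℝ))) with hf
  have h1 : Tendsto (fun t : ℝ => t ^ (p / (2 * ε)) * Real.exp (-c₂ * t)) atTop (𝓝 0) :=
    tendsto_rpow_mul_exp_neg_mul_atTop_nhds_zero _ _ hc₂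
  have h2 : Tendsto (fun n : ℕ => (n : ℝ) ^ (ε : ℝ)) atTop atTop :=
    (tendsto_rpow_atTop hε0).comp tendsto_natCast_atTop_atTop
  have h3 : Tendsto (fun n : ℕ => ((n : ℝ) ^ (ε : ℝ)) ^ (p / (2 * ε)) *
      Real.exp (-c₂ * (n : ℝ) ^ (ε : ℝ))) atTop (𝓝 0) := h1.comp h2
  have hexp : ε * (p / (2 * ε)) = p / 2 := by field_simp
  have h4 : Tendsto f atTop (𝓝 (C₂ * 0)) := by
    refine Tendsto.const_mul _ (h3.congr (fun n => ?_))
    congr 1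
    rw [← Real.rpow_mul (by positivity : (0:ℝ) ≤ (n:ℝ)), hexp]
  obtain ⟨M, hM⟩ := h4.bddAbove_range
  refine ⟨max 1 M, lt_of_lt_of_le one_pos (le_max_left _ _), fun n hn => ?_⟩
  have hn0 : (0 : ℝ) < (n : ℝ) := by exact_mod_cast hn
  have hfn : f n ≤ max 1 M := le_trans (hM (Set.mem_range_self n)) (le_max_right _ _)
  have key : f n * (n : ℝ) ^ (-(p / 2) : ℝ) = C₂ * Real.exp (-c₂ * (n : ℝ) ^ (ε : ℝ)) := by
    rw [hf]
    have hone : (n : ℝ) ^ (p / 2) * (n : ℝ) ^ (-(p / 2) : ℝ) = 1 := by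
      rw [← Real.rpow_add hn0]; simp
    calc C₂ * ((n : ℝ) ^ (p / 2) * Real.exp (-c₂ * (n : ℝ) ^ (ε : ℝ))) * (n:ℝ) ^ (-(p/2):ℝ)
        = C₂ * Real.exp (-c₂ * (n : ℝ) ^ (ε : ℝ)) *
            ((n : ℝ) ^ (p / 2) * (n : ℝ) ^ (-(p / 2) : ℝ)) := by ring
      _ = _ := by rw [hone]; ring
  rw [← key]
  exact mul_le_mul_of_nonneg_right hfn (Real.rpow_nonneg hn0.le _)

end Aux

/-- there is `C > 0` such that for every `x ∈ K∩ℤ^d` and `n ≥ 1`,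
`ℙ(τ_x > n) ≤ C(1+|x|^p) n^{−p/2}`. -/


theorem stmt18 {d : ℕ} (hd : 1 ≤ d) {Ω : Type*} [MeasurableSpace Ω]
    (P : Measure Ω) [IsProbabilityMeasure P]
    (X : ℕ → Ω → (Fin d → ℤ))
    (hXmeas : ∀ n, Measurable (X n))
    (hXindep : iIndepFun X P)
    (hXident : ∀ n, IdentDistrib (X n) (X 0) P P)
    (K : Set (EuclideanSpace ℝ (Fin d)))
    (p ε : ℝ) (hp : 1 ≤ p) (hε : ε ∈ Set.Ioo (0 : ℝ) (1 / 2))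
    (u : EuclideanSpace ℝ (Fin d) → ℝ) (hu : ∀ z ∈ K, 0 ≤ u z)
    -- (i) bound on the exit time started from a "typical" point of the cone:
    (C₁ : ℝ) (hC₁ : 0 < C₁)
    (hi : ∀ n : ℕ, 1 ≤ n → ∀ y : Fin d → ℤ, embZ d y ∈ Kne K ε n →
      (P {ω | ∀ k : ℕ, (k : ℝ) ≤ (n : ℝ) - (n : ℝ) ^ (1 - ε : ℝ) →
          embZ d (y + walk X k ω) ∈ K}).toReal
        ≤ C₁ * u (embZ d y) * (n : ℝ) ^ (-(p / 2) : ℝ))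
    -- (ii) the walk enters `K_{n,ε}` quickly or dies:
    (C₂ c₂ : ℝ) (hC₂ : 0 < C₂) (hc₂ : 0 < c₂)
    (hii : ∀ x : Fin d → ℤ, embZ d x ∈ K → ∀ n : ℕ, 1 ≤ n →
      (P (stayEvent X K x n ∩
          {ω | ∀ k : ℕ, (k : ℝ) ≤ (n : ℝ) ^ (1 - ε : ℝ) →
            embZ d (x + walk X k ω) ∉ Kne K ε n})).toReal
        ≤ C₂ * Real.exp (-c₂ * (n : ℝ) ^ (ε : ℝ)))
    -- (iii) bound on `E[u(x + S(γ_{n,x})); τ_x > γ_{n,x}, γ_{n,x} ≤ n^{1−ε}]`: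
    (C₃ : ℝ) (hC₃ : 0 < C₃)
    (hiii : ∀ x : Fin d → ℤ, embZ d x ∈ K → ∀ n : ℕ, 1 ≤ n →
      (∑' k : ℕ, if (k : ℝ) ≤ (n : ℝ) ^ (1 - ε : ℝ) then
          ∫⁻ ω in {ω | embZ d (x + walk X k ω) ∈ Kne K ε n ∧
              (∀ j < k, embZ d (x + walk X j ω) ∉ Kne K ε n) ∧
              ∀ j ≤ k, embZ d (x + walk X j ω) ∈ K},
            ENNReal.ofReal (u (embZ d (x + walk X k ω))) ∂P
        else 0)
        ≤ ENNReal.ofReal (C₃ * (1 + ‖embZ d x‖ ^ p))) :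
    ∃ C : ℝ, 0 < C ∧ ∀ x : Fin d → ℤ, embZ d x ∈ K → ∀ n : ℕ, 1 ≤ n →
      (P (stayEvent X K x n)).toReal
        ≤ C * (1 + ‖embZ d x‖ ^ p) * (n : ℝ) ^ (-(p / 2) : ℝ) := by
  obtain ⟨hε0, hε2⟩ := hε
  obtain ⟨C', hC'pos, hC'⟩ := expBound (p := p) (C₂ := C₂) (c₂ := c₂) hε0 hc₂
  refine ⟨C' + C₁ * C₃, by positivity, ?_⟩
  intro x hx n hn
  have hn0 : (0:ℝ) < n := by exact_mod_cast hn
  have hn1 : (1:ℝ) ≤ n := by exact_mod_cast hn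
  have hTn : (n:ℝ) ^ (1 - ε : ℝ) ≤ (n:ℝ) := by
    nth_rewrite 2 [← Real.rpow_one (n:ℝ)]
    exact Real.rpow_le_rpow_of_exponent_le hn1 (by linarith)
  -- the sets
  set SA : ∀ _ : ℕ, (Fin d → ℤ) → Set (Fin _ → (Fin d → ℤ)) := fun k y =>
    {v : Fin k → (Fin d → ℤ) | embZ d (x + psum v k) ∈ Kne K ε n ∧
      (∀ j < k, embZ d (x + psum v j) ∉ Kne K ε n) ∧
      (∀ j ≤ k, embZ d (x + psum v j) ∈ K) ∧ x + psum v k = y} with hSA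
  set TB : ∀ k : ℕ, (Fin d → ℤ) → Set (Fin (n - k) → (Fin d → ℤ)) := fun k y =>
    {v : Fin (n - k) → (Fin d → ℤ) | ∀ i ≤ n - k, embZ d (y + psum v i) ∈ K} with hTB
  set Aset : ℕ → (Fin d → ℤ) → Set Ω := fun k y => tup X 0 k ⁻¹' SA k y with hAset
  set Bset : ℕ → (Fin d → ℤ) → Set Ω := fun k y => tup X k (n - k) ⁻¹' TB k y with hBset
  set D : ℕ → Set Ω := fun k => ⋃ y : Fin d → ℤ, (Aset k y ∩ Bset k y) with hD
  set G : Set Ω := stayEvent X K x n ∩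
      {ω | ∀ k : ℕ, (k:ℝ) ≤ (n:ℝ) ^ (1 - ε : ℝ) → embZ d (x + walk X k ω) ∉ Kne K ε n} with hG
  -- the covering
  have hcover : stayEvent X K x n ⊆
      G ∪ ⋃ k : ℕ, ⋃ (_ : (k:ℝ) ≤ (n:ℝ) ^ (1 - ε : ℝ)), D k := by
    intro ω hω
    by_cases hGcase : ∀ k : ℕ, (k:ℝ) ≤ (n:ℝ) ^ (1 - ε : ℝ) →
        embZ d (x + walk X k ω) ∉ Kne K ε n
    · exact Or.inl ⟨hω, hGcase⟩
    · push_neg at hGcase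
      have hQ : ∃ k : ℕ, embZ d (x + walk X k ω) ∈ Kne K ε n ∧
          (k:ℝ) ≤ (n:ℝ) ^ (1 - ε : ℝ) := by
        obtain ⟨k, hk1, hk2⟩ := hGcase
        exact ⟨k, hk2, hk1⟩
      set k₀ := Nat.find hQ with hk₀
      obtain ⟨hk₀mem, hk₀le⟩ := Nat.find_spec hQ
      have hk₀n : k₀ ≤ n := by
        have : (k₀:ℝ) ≤ (n:ℝ) := le_trans hk₀le hTn
        exact_mod_cast this
      refine Or.inr (Set.mem_iUnion.2 ⟨k₀, Set.mem_iUnion.2 ⟨hk₀le,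
        Set.mem_iUnion.2 ⟨x + walk X k₀ ω, ?_, ?_⟩⟩⟩)
      · -- membership in Aset
        show tup X 0 k₀ ω ∈ SA k₀ (x + walk X k₀ ω)
        refine ⟨?_, ?_, ?_, ?_⟩
        · rw [psum_tup_zero k₀ ω le_rfl]; exact hk₀mem
        · intro j hj
          rw [psum_tup_zero k₀ ω hj.le]
          intro hmem
          have hjle : (j:ℝ) ≤ (n:ℝ) ^ (1 - ε : ℝ) := by
            refine le_trans ?_ hk₀le
            exact_mod_cast hj.le
          exact Nat.find_min hQ hj ⟨hmem, hjle⟩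
        · intro j hj
          rw [psum_tup_zero k₀ ω hj]
          exact hω j (le_trans hj hk₀n)
        · rw [psum_tup_zero k₀ ω le_rfl]
      · -- membership in Bset
        show tup X k₀ (n - k₀) ω ∈ TB k₀ (x + walk X k₀ ω)
        intro i hi'
        rw [psum_tup k₀ (n - k₀) ω hi']
        have heq : x + walk X k₀ ω + ∑ j ∈ Finset.range i, X (k₀ + j) ω
            = x + walk X (k₀ + i) ω := by
          rw [walk_add k₀ i ω, add_assoc]
        rw [heq]
        exact hω (k₀ + i) (by omega)
  -- bound on the G piece
  have hGbound : P G ≤ ENNReal.ofReal (C₂ * Real.exp (-c₂ * (n:ℝ) ^ (ε:ℝ))) := by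
    rw [ENNReal.le_ofReal_iff_toReal_le (measure_ne_top P _) (by positivity)]
    exact hii x hx n hn
  -- per-k bound
  have hDbound : ∀ k : ℕ, (k:ℝ) ≤ (n:ℝ) ^ (1 - ε : ℝ) →
      P (D k) ≤ ENNReal.ofReal (C₁ * (n:ℝ) ^ (-(p/2):ℝ)) *
        ∫⁻ ω in {ω | embZ d (x + walk X k ω) ∈ Kne K ε n ∧
              (∀ j < k, embZ d (x + walk X j ω) ∉ Kne K ε n) ∧
              ∀ j ≤ k, embZ d (x + walk X j ω) ∈ K},
            ENNReal.ofReal (u (embZ d (x + walk X k ω))) ∂P := by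
    intro k hk
    have hkn : k ≤ n := by
      have : (k:ℝ) ≤ (n:ℝ) := le_trans hk hTn
      exact_mod_cast this
    -- per-y bound
    have hy : ∀ y : Fin d → ℤ, P (Aset k y ∩ Bset k y) ≤
        ENNReal.ofReal (C₁ * (n:ℝ) ^ (-(p/2):ℝ)) *
          (P (Aset k y) * ENNReal.ofReal (u (embZ d y))) := by
      intro y
      by_cases hyK : embZ d y ∈ Kne K ε n
      · rw [hAset, hBset, indepSplit hXmeas hXindep k (n - k) (SA k y) (TB k y)]
        have hB1 : P (tup X k (n - k) ⁻¹' TB k y) ≤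
            ENNReal.ofReal (C₁ * u (embZ d y) * (n:ℝ) ^ (-(p/2):ℝ)) := by
          rw [lawShift hXmeas hXindep hXident k (n - k) (TB k y)]
          have hsub : tup X 0 (n - k) ⁻¹' TB k y ⊆
              {ω | ∀ i : ℕ, (i : ℝ) ≤ (n : ℝ) - (n : ℝ) ^ (1 - ε : ℝ) →
                embZ d (y + walk X i ω) ∈ K} := by
            intro ω hω i hi'
            have hik : i ≤ n - k := by
              have h1 : (i:ℝ) ≤ (n:ℝ) - (k:ℝ) := by linarith
              have h2 : ((n - k : ℕ) : ℝ) = (n:ℝ) - (k:ℝ) := by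
                push_cast [Nat.cast_sub hkn]; ring
              rw [← h2] at h1
              exact_mod_cast h1
            have := hω i hik
            rwa [psum_tup_zero (n - k) ω hik] at this
          refine le_trans (measure_mono hsub) ?_
          rw [ENNReal.le_ofReal_iff_toReal_le (measure_ne_top P _) ?_]
          · exact hi n hn y hyK
          · have := hu (embZ d y) hyK.1
            positivity
        have hflip : ENNReal.ofReal (C₁ * u (embZ d y) * (n:ℝ) ^ (-(p/2):ℝ)) =
            ENNReal.ofReal (C₁ * (n:ℝ) ^ (-(p/2):ℝ)) * ENNReal.ofReal (u (embZ d y)) := by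
          rw [← ENNReal.ofReal_mul (by positivity)]
          congr 1
          ring
        calc P (tup X 0 k ⁻¹' SA k y) * P (tup X k (n - k) ⁻¹' TB k y)
            ≤ P (tup X 0 k ⁻¹' SA k y) *
              (ENNReal.ofReal (C₁ * (n:ℝ) ^ (-(p/2):ℝ)) * ENNReal.ofReal (u (embZ d y))) := by
              rw [← hflip]; exact mul_le_mul_right hB1 _
          _ = ENNReal.ofReal (C₁ * (n:ℝ) ^ (-(p/2):ℝ)) *
              (P (tup X 0 k ⁻¹' SA k y) * ENNReal.ofReal (u (embZ d y))) := by ring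
      · have hempty : Aset k y = ∅ := by
          rw [hAset]
          ext ω
          simp only [Set.mem_preimage, Set.mem_empty_iff_false, iff_false]
          intro hmem
          exact hyK (hmem.2.2.2 ▸ hmem.1)
        rw [Set.eq_empty_iff_forall_notMem] at hempty
        have : Aset k y ∩ Bset k y = ∅ := by
          rw [Set.eq_empty_iff_forall_notMem]
          intro ω hω
          exact hempty ω hω.1
        rw [this]
        simp
    -- decomposition of the lintegral
    have hdecomp : {ω | embZ d (x + walk X k ω) ∈ Kne K ε n ∧
              (∀ j < k, embZ d (x + walk X j ω) ∉ Kne K ε n) ∧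
              ∀ j ≤ k, embZ d (x + walk X j ω) ∈ K} = ⋃ y : Fin d → ℤ, Aset k y := by
      ext ω
      simp only [Set.mem_setOf_eq, Set.mem_iUnion, hAset, Set.mem_preimage]
      constructor
      · rintro ⟨h1, h2, h3⟩
        refine ⟨x + walk X k ω, ?_, ?_, ?_, ?_⟩
        · rw [psum_tup_zero k ω le_rfl]; exact h1
        · intro j hj; rw [psum_tup_zero k ω hj.le]; exact h2 j hj
        · intro j hj; rw [psum_tup_zero k ω hj]; exact h3 j hj
        · rw [psum_tup_zero k ω le_rfl]
      · rintro ⟨y, h1, h2, h3, _⟩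
        rw [psum_tup_zero k ω le_rfl] at h1
        refine ⟨h1, fun j hj => ?_, fun j hj => ?_⟩
        · have := h2 j hj; rwa [psum_tup_zero k ω hj.le] at this
        · have := h3 j hj; rwa [psum_tup_zero k ω hj] at this
    have hAmeas : ∀ y : Fin d → ℤ, MeasurableSet (Aset k y) := fun y =>
      (tup_meas hXmeas 0 k) (Set.to_countable _).measurableSet
    have hAdisj : Pairwise (Function.onFun Disjoint (Aset k)) := by
      intro y y' hyy'
      refine Set.disjoint_left.2 (fun ω hω hω' => ?_)
      rw [hAset] at hω hω'
      exact hyy' (hω.2.2.2.symm.trans hω'.2.2.2)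
    have hlint : ∑' y : Fin d → ℤ, P (Aset k y) * ENNReal.ofReal (u (embZ d y)) =
        ∫⁻ ω in {ω | embZ d (x + walk X k ω) ∈ Kne K ε n ∧
              (∀ j < k, embZ d (x + walk X j ω) ∉ Kne K ε n) ∧
              ∀ j ≤ k, embZ d (x + walk X j ω) ∈ K},
            ENNReal.ofReal (u (embZ d (x + walk X k ω))) ∂P := by
      rw [hdecomp, lintegral_iUnion hAmeas hAdisj]
      refine tsum_congr (fun y => ?_)
      have hconst : ∫⁻ ω in Aset k y,
          ENNReal.ofReal (u (embZ d (x + walk X k ω))) ∂P =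
          ∫⁻ _ in Aset k y, ENNReal.ofReal (u (embZ d y)) ∂P := by
        refine setLIntegral_congr_fun (hAmeas y) (fun ω hω => ?_)
        have : x + walk X k ω = y := by
          rw [hAset] at hω
          have := hω.2.2.2
          rwa [psum_tup_zero k ω le_rfl] at this
        rw [this]
      rw [hconst, setLIntegral_const, mul_comm]
    calc P (D k) ≤ ∑' y : Fin d → ℤ, P (Aset k y ∩ Bset k y) := by
          rw [hD]; exact measure_iUnion_le _
      _ ≤ ∑' y : Fin d → ℤ, ENNReal.ofReal (C₁ * (n:ℝ) ^ (-(p/2):ℝ)) *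
            (P (Aset k y) * ENNReal.ofReal (u (embZ d y))) := Summable.tsum_le_tsum hy
            ENNReal.summable ENNReal.summable
      _ = ENNReal.ofReal (C₁ * (n:ℝ) ^ (-(p/2):ℝ)) *
            ∑' y : Fin d → ℤ, P (Aset k y) * ENNReal.ofReal (u (embZ d y)) :=
          ENNReal.tsum_mul_left
      _ = _ := by rw [hlint]
  -- assembling
  have hmain : P (stayEvent X K x n) ≤
      ENNReal.ofReal (C₂ * Real.exp (-c₂ * (n:ℝ) ^ (ε:ℝ))) +
        ENNReal.ofReal (C₁ * (n:ℝ) ^ (-(p/2):ℝ)) *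
          ENNReal.ofReal (C₃ * (1 + ‖embZ d x‖ ^ p)) := by
    calc P (stayEvent X K x n)
        ≤ P (G ∪ ⋃ k : ℕ, ⋃ (_ : (k:ℝ) ≤ (n:ℝ) ^ (1 - ε : ℝ)), D k) :=
          measure_mono hcover
      _ ≤ P G + P (⋃ k : ℕ, ⋃ (_ : (k:ℝ) ≤ (n:ℝ) ^ (1 - ε : ℝ)), D k) :=
          measure_union_le _ _
      _ ≤ P G + ∑' k : ℕ, P (⋃ (_ : (k:ℝ) ≤ (n:ℝ) ^ (1 - ε : ℝ)), D k) := by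
          exact add_le_add_right (measure_iUnion_le _) _
      _ ≤ P G + ∑' k : ℕ, (if (k:ℝ) ≤ (n:ℝ) ^ (1 - ε : ℝ) then
            ENNReal.ofReal (C₁ * (n:ℝ) ^ (-(p/2):ℝ)) *
              ∫⁻ ω in {ω | embZ d (x + walk X k ω) ∈ Kne K ε n ∧
                  (∀ j < k, embZ d (x + walk X j ω) ∉ Kne K ε n) ∧
                  ∀ j ≤ k, embZ d (x + walk X j ω) ∈ K},
                ENNReal.ofReal (u (embZ d (x + walk X k ω))) ∂P
            else 0) := by
          refine add_le_add_right (Summable.tsum_le_tsum (fun k => ?_)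
            ENNReal.summable ENNReal.summable) _
          by_cases hk : (k:ℝ) ≤ (n:ℝ) ^ (1 - ε : ℝ)
          · simp only [hk, if_true, Set.iUnion_true]
            exact hDbound k hk
          · simp [hk]
      _ = P G + ENNReal.ofReal (C₁ * (n:ℝ) ^ (-(p/2):ℝ)) *
            ∑' k : ℕ, (if (k:ℝ) ≤ (n:ℝ) ^ (1 - ε : ℝ) then
              ∫⁻ ω in {ω | embZ d (x + walk X k ω) ∈ Kne K ε n ∧
                  (∀ j < k, embZ d (x + walk X j ω) ∉ Kne K ε n) ∧
                  ∀ j ≤ k, embZ d (x + walk X j ω) ∈ K},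
                ENNReal.ofReal (u (embZ d (x + walk X k ω))) ∂P
              else 0) := by
          rw [← ENNReal.tsum_mul_left]
          congr 1
          refine tsum_congr (fun k => ?_)
          by_cases hk : (k:ℝ) ≤ (n:ℝ) ^ (1 - ε : ℝ) <;> simp [hk]
      _ ≤ ENNReal.ofReal (C₂ * Real.exp (-c₂ * (n:ℝ) ^ (ε:ℝ))) +
            ENNReal.ofReal (C₁ * (n:ℝ) ^ (-(p/2):ℝ)) *
              ENNReal.ofReal (C₃ * (1 + ‖embZ d x‖ ^ p)) := by
          exact add_le_add hGbound (mul_le_mul_right (hiii x hx n hn) _)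
  -- conclusion
  have hxnn : (0:ℝ) ≤ ‖embZ d x‖ ^ p := Real.rpow_nonneg (norm_nonneg _) p
  have hnp : (0:ℝ) < (n:ℝ) ^ (-(p/2):ℝ) := Real.rpow_pos_of_pos hn0 _
  have hb : P (stayEvent X K x n) ≤ ENNReal.ofReal
      (C₂ * Real.exp (-c₂ * (n:ℝ) ^ (ε:ℝ)) +
        C₁ * (n:ℝ) ^ (-(p/2):ℝ) * (C₃ * (1 + ‖embZ d x‖ ^ p))) := by
    refine le_trans hmain (le_of_eq ?_)
    rw [← ENNReal.ofReal_mul (by positivity : (0:ℝ) ≤ C₁ * (n:ℝ) ^ (-(p/2):ℝ)),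
      ← ENNReal.ofReal_add (by positivity) (by positivity)]
  have htoReal : (P (stayEvent X K x n)).toReal ≤
      C₂ * Real.exp (-c₂ * (n:ℝ) ^ (ε:ℝ)) +
        C₁ * (n:ℝ) ^ (-(p/2):ℝ) * (C₃ * (1 + ‖embZ d x‖ ^ p)) :=
    ENNReal.toReal_le_of_le_ofReal (by positivity) hb
  refine le_trans htoReal ?_
  have h1 : C₂ * Real.exp (-c₂ * (n:ℝ) ^ (ε:ℝ)) ≤ C' * (n:ℝ) ^ (-(p/2):ℝ) := hC' n hn
  have h2 : C' * (n:ℝ) ^ (-(p/2):ℝ) ≤ C' * (1 + ‖embZ d x‖ ^ p) * (n:ℝ) ^ (-(p/2):ℝ) := by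
    have hone : (1:ℝ) ≤ 1 + ‖embZ d x‖ ^ p := by linarith
    calc C' * (n:ℝ) ^ (-(p/2):ℝ) = C' * 1 * (n:ℝ) ^ (-(p/2):ℝ) := by ring
      _ ≤ C' * (1 + ‖embZ d x‖ ^ p) * (n:ℝ) ^ (-(p/2):ℝ) := by
          apply mul_le_mul_of_nonneg_right _ hnp.le
          exact mul_le_mul_of_nonneg_left hone hC'pos.le
  calc C₂ * Real.exp (-c₂ * (n:ℝ) ^ (ε:ℝ)) +
        C₁ * (n:ℝ) ^ (-(p/2):ℝ) * (C₃ * (1 + ‖embZ d x‖ ^ p))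
      ≤ C' * (1 + ‖embZ d x‖ ^ p) * (n:ℝ) ^ (-(p/2):ℝ) +
        C₁ * (n:ℝ) ^ (-(p/2):ℝ) * (C₃ * (1 + ‖embZ d x‖ ^ p)) := by
        linarith [h1.trans h2]
    _ = (C' + C₁ * C₃) * (1 + ‖embZ d x‖ ^ p) * (n:ℝ) ^ (-(p/2):ℝ) := by ring
end
end
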